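/- Let ω ∈ [0, π) and s ≥ 0. Set c := cos(ω/2) if ω ≤ π/2 and c := (sin ω)^{1/2} cos(ω/2) if ω > π/2, and set κ := c/2 and φ := arctan(2 tan(ω/2)). Then for every λ ∈ s + S_ω (with the convention s + S_0 = (s,∞)) one has: √λ ∈ S_{ω/2}, Re(√λ) ≥ c √s, and √λ ∈ κ√s + S_φ, where √ denotes the principal branch of the square root. -/

import Mathlib

/-! Adding `s ≥ 0` to `ζ` can only decrease `|arg|`, so `λ = s + ζ ∈ S_ω` and `√λ ∈ S_{ω/2}`.

Since `(Re √λ)² = (|λ| + Re λ)/2`, the bound `Re √λ ≥ c √s` amounts to `|λ| + Re λ ≥ 2c²s`.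
For `Re ζ ≥ 0` this holds because `c ≤ 1`. Otherwise `π/2 < |arg ζ| < ω`, so
`c² ≤ sin² ω ≤ sin² (arg ζ)`, and multiplying `2 s (|λ| - Re λ) ≤ |ζ|²` (that is, `(|λ| - s)² ≥ 0`)
by `|λ| + Re λ` gives `2 s (Im ζ)² ≤ |ζ|² (|λ| + Re λ)`.

Finally, moving `√λ` to the left by at most half its real part at most doubles `|Im| / Re`,
whence `|arg (√λ - κ√s)| < arctan (2 tan (ω/2))`. -/

open Complex Filter Set MeasureTheory

/-- The open sector `S_θ = {ζ ∈ ℂ \ (-∞,0] : |arg ζ| < θ}` for `θ ∈ (0,π)`,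
with the convention `S_0 = (0,∞)`. -/
noncomputable def sector (θ : ℝ) : Set ℂ :=
  if θ = 0 then {ζ : ℂ | 0 < ζ.re ∧ ζ.im = 0}
  else {ζ : ℂ | ζ ≠ 0 ∧ |ζ.arg| < θ}

/-- Modified Bessel function of the first kind, `I_β`. -/
noncomputable def besselI (β ζ : ℂ) : ℂ :=
  (ζ / 2) ^ β * ∑' k : ℕ, ζ ^ (2 * k) / ((4 : ℂ) ^ k * (k.factorial : ℂ) * Complex.Gamma (β + (k : ℂ) + 1))

/-- Modified Bessel function of the second kind, `K_β` (for `Re β ∉ ℤ`). -/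
noncomputable def besselK (β ζ : ℂ) : ℂ :=
  ((Real.pi : ℂ) / (2 * Complex.sin (β * (Real.pi : ℂ)))) * (besselI (-β) ζ - besselI β ζ)

/-- The function `u_z(λ) = (λz)^α K_α(λz) / (2^(α-1) Γ(α))`. -/
noncomputable def uFun (α z l : ℂ) : ℂ :=
  (l * z) ^ α * besselK α (l * z) / ((2 : ℂ) ^ (α - 1) * Complex.Gamma α)

/-- The function `v_z(λ) = (Γ(1-α)/2^α) (λz)^α I_{-α}(λz)`. -/
noncomputable def vFun (α z l : ℂ) : ℂ :=
  (Complex.Gamma (1 - α) / (2 : ℂ) ^ α) * ((l * z) ^ α * besselI (-α) (l * z))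

/-- The function `w_z(λ) = (Γ(α)/2^(1-α)) (λ⁻¹ z)^α I_α(λz)`. -/
noncomputable def wFun (α z l : ℂ) : ℂ :=
  (Complex.Gamma α / (2 : ℂ) ^ (1 - α)) * ((l⁻¹ * z) ^ α * besselI α (l * z))

open scoped Real

theorem mem_sector_iff {θ : ℝ} (hθ : 0 ≤ θ) {ζ : ℂ} :
    ζ ∈ sector θ ↔ ζ ≠ 0 ∧ (arg ζ = 0 ∨ |arg ζ| < θ) := by
  rcases hθ.eq_or_lt with rfl | hθ
  · simp only [sector, if_pos, arg_eq_zero_iff, abs_lt, neg_zero]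
    constructor
    · rintro ⟨hre, him⟩
      exact ⟨ne_zero_of_re_pos hre, Or.inl ⟨hre.le, him⟩⟩
    · rintro ⟨hne, ⟨hre, him⟩ | ⟨hlt, hgt⟩⟩
      · refine ⟨hre.lt_of_ne fun h => hne (Complex.ext h.symm him), him⟩
      · exact absurd (hlt.trans hgt) (lt_irrefl _)
  · simp only [sector, if_neg hθ.ne']
    refine and_congr_right fun _ => ⟨Or.inr, ?_⟩
    rintro (h | h)
    · rwa [h, abs_zero]
    · exact h

/-- The inequality `cos (arg ζ) ≤ cos (arg (s + ζ))`, cleared of denominators: `t ↦ t / √(t² + y²)`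
is nondecreasing. -/
theorem re_mul_norm_ofReal_add_le {s : ℝ} (hs : 0 ≤ s) (ζ : ℂ) :
    ζ.re * ‖(s : ℂ) + ζ‖ ≤ ((s : ℂ) + ζ).re * ‖ζ‖ := by
  have ha : ‖ζ‖ ^ 2 = ζ.re ^ 2 + ζ.im ^ 2 := by rw [Complex.sq_norm, normSq_apply]; ring
  have hA : ‖(s : ℂ) + ζ‖ ^ 2 = (s + ζ.re) ^ 2 + ζ.im ^ 2 := by
    rw [Complex.sq_norm, normSq_apply]; simp; ring
  rw [add_re, ofReal_re]
  have ha0 : 0 ≤ ‖ζ‖ := norm_nonneg _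
  have hA0 : 0 ≤ ‖(s : ℂ) + ζ‖ := norm_nonneg _
  generalize ‖ζ‖ = a at ha ha0
  generalize ‖(s : ℂ) + ζ‖ = A at hA hA0
  generalize ζ.re = x at ha hA
  generalize ζ.im = y at ha hA
  rcases le_or_gt 0 x with hx | hx
  · refine le_of_sq_le_sq ?_ (by positivity)
    rw [mul_pow, mul_pow, ha, hA]
    nlinarith [mul_nonneg (mul_nonneg hs hx) (sq_nonneg y), mul_nonneg (sq_nonneg s) (sq_nonneg y)]
  rcases le_or_gt 0 (s + x) with hsx | hsx
  · nlinarith [mul_nonneg hsx ha0, mul_nonneg (neg_nonneg.2 hx.le) hA0]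
  · suffices -((s + x) * a) ≤ -(x * A) by linarith
    refine le_of_sq_le_sq ?_ (by nlinarith)
    rw [neg_sq, neg_sq, mul_pow, mul_pow, ha, hA]
    nlinarith [mul_nonneg (mul_nonneg hs (by linarith : (0 : ℝ) ≤ -(2 * x + s))) (sq_nonneg y)]

theorem abs_arg_ofReal_add_le {s : ℝ} (hs : 0 ≤ s) (ζ : ℂ) : |arg ((s : ℂ) + ζ)| ≤ |arg ζ| := by
  rcases eq_or_ne ζ 0 with rfl | hζ
  · simp [arg_ofReal_of_nonneg hs]
  rcases eq_or_ne ((s : ℂ) + ζ) 0 with h | h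
  · simp [h]
  rw [← Real.strictAntiOn_cos.le_iff_ge ⟨abs_nonneg _, abs_arg_le_pi _⟩
    ⟨abs_nonneg _, abs_arg_le_pi _⟩, Real.cos_abs, Real.cos_abs, cos_arg hζ, cos_arg h,
    div_le_div_iff₀ (norm_pos_iff.2 hζ) (norm_pos_iff.2 h)]
  exact re_mul_norm_ofReal_add_le hs ζ

theorem ofReal_add_mem_sector {θ s : ℝ} (hθ : θ ∈ Icc 0 π) (hs : 0 ≤ s) {ζ : ℂ}
    (hζ : ζ ∈ sector θ) : (s : ℂ) + ζ ∈ sector θ := by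
  rw [mem_sector_iff hθ.1] at hζ ⊢
  obtain ⟨hζ0, hζarg⟩ := hζ
  have hle := abs_arg_ofReal_add_le hs ζ
  refine ⟨fun hsum => ?_, ?_⟩
  · have hζs : ζ = ((-s : ℝ) : ℂ) := by push_cast; linear_combination hsum
    rcases hs.eq_or_lt with rfl | hs
    · exact hζ0 (by simpa using hζs)
    · rw [hζs, arg_ofReal_of_neg (by linarith), abs_of_pos Real.pi_pos] at hζarg
      rcases hζarg with hπ | hπ
      · exact Real.pi_ne_zero hπ
      · linarith [hθ.2]
  · rcases hζarg with harg | harg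
    · rw [harg, abs_zero] at hle
      exact Or.inl (abs_nonpos_iff.1 hle)
    · exact Or.inr (hle.trans_lt harg)

theorem arg_cpow_half {z : ℂ} (hz : z ≠ 0) : arg (z ^ ((1 : ℂ) / 2)) = arg z / 2 := by
  have him : (log z * (1 / 2)).im = arg z / 2 := by simp [log_im]; ring
  rw [cpow_def_of_ne_zero hz, arg_exp, him, toIocMod_eq_self]
  constructor <;> linarith [neg_pi_lt_arg z, arg_le_pi z, Real.pi_pos]

theorem cpow_half_mem_sector {θ : ℝ} (hθ : 0 ≤ θ) {z : ℂ} (hz : z ∈ sector θ) :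
    z ^ ((1 : ℂ) / 2) ∈ sector (θ / 2) := by
  rw [mem_sector_iff hθ] at hz
  rw [mem_sector_iff (by linarith), arg_cpow_half hz.1, cpow_ne_zero_iff, abs_div, abs_two]
  refine ⟨Or.inl hz.1, ?_⟩
  rcases hz.2 with h | h
  · simp [h]
  · right; linarith

theorem two_mul_sin_sq_arg_le {s : ℝ} (hs : 0 ≤ s) (ζ : ℂ) :
    2 * s * Real.sin (arg ζ) ^ 2 ≤ ‖(s : ℂ) + ζ‖ + ((s : ℂ) + ζ).re := by
  rcases eq_or_ne ζ 0 with rfl | hζ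
  · simp [abs_of_nonneg hs]; linarith
  have hN : ‖(s : ℂ) + ζ‖ ^ 2 = ((s : ℂ) + ζ).re ^ 2 + ζ.im ^ 2 := by
    rw [Complex.sq_norm, normSq_apply]; simp; ring
  have hζsq : ‖ζ‖ ^ 2 = (((s : ℂ) + ζ).re - s) ^ 2 + ζ.im ^ 2 := by
    rw [Complex.sq_norm, normSq_apply]; simp; ring
  have hR : -‖(s : ℂ) + ζ‖ ≤ ((s : ℂ) + ζ).re := neg_le_of_abs_le (abs_re_le_norm _)
  rw [sin_arg, div_pow, mul_div_assoc', div_le_iff₀ (pow_pos (norm_pos_iff.2 hζ) 2), hζsq]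
  generalize ‖(s : ℂ) + ζ‖ = N at hN hR
  generalize ((s : ℂ) + ζ).re = R at hN hR
  -- `Im ζ² = (N - R)(N + R)` and `|ζ|² - 2 s (N - R) = (N - s)²`
  nlinarith [mul_nonneg (neg_le_iff_add_nonneg.1 hR) (sq_nonneg (N - s))]

theorem two_mul_le_norm_ofReal_add_add_re {s : ℝ} {ζ : ℂ} (hζ : 0 ≤ ζ.re) :
    2 * s ≤ ‖(s : ℂ) + ζ‖ + ((s : ℂ) + ζ).re := by
  have := re_le_norm ((s : ℂ) + ζ)
  simp only [add_re, ofReal_re] at this ⊢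
  linarith

/-- The constant `c` of the lower bound `Re √λ ≥ c √s`. -/
noncomputable def sectorSqrtConst (ω : ℝ) : ℝ :=
  if ω ≤ π / 2 then Real.cos (ω / 2) else √(Real.sin ω) * Real.cos (ω / 2)

theorem sectorSqrtConst_nonneg {ω : ℝ} (hω : ω ∈ Icc 0 π) : 0 ≤ sectorSqrtConst ω := by
  have : 0 ≤ Real.cos (ω / 2) :=
    Real.cos_nonneg_of_mem_Icc ⟨by linarith [hω.1, Real.pi_pos], by linarith [hω.2]⟩
  unfold sectorSqrtConst
  split_ifs <;> positivity

theorem sq_sectorSqrtConst_le_one (ω : ℝ) : sectorSqrtConst ω ^ 2 ≤ 1 := by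
  unfold sectorSqrtConst
  split_ifs
  · exact Real.cos_sq_le_one _
  · rw [mul_pow]
    exact mul_le_one₀ (pow_le_one₀ (Real.sqrt_nonneg _) (Real.sqrt_le_one.2 (Real.sin_le_one ω)))
      (sq_nonneg _) (Real.cos_sq_le_one _)

theorem sq_sectorSqrtConst_le_sin_sq {ω θ : ℝ} (hω : ω ≤ π) (hθ : π / 2 < θ) (hθω : θ < ω) :
    sectorSqrtConst ω ^ 2 ≤ Real.sin θ ^ 2 := by
  have hsin : 0 ≤ Real.sin ω := Real.sin_nonneg_of_nonneg_of_le_pi (by linarith) hω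
  have hsinθ : Real.sin ω ≤ Real.sin θ := by
    rw [← Real.sin_pi_sub ω, ← Real.sin_pi_sub θ]
    exact Real.sin_le_sin_of_le_of_le_pi_div_two (by linarith) (by linarith) (by linarith)
  have hcos : 0 ≤ Real.cos (ω / 2) :=
    Real.cos_nonneg_of_mem_Icc ⟨by linarith [Real.pi_pos], by linarith⟩
  have hcos_le_sin : Real.cos (ω / 2) ≤ Real.sin (ω / 2) := by
    rw [← Real.cos_pi_div_two_sub]
    exact Real.cos_le_cos_of_nonneg_of_le_pi (by linarith) (by linarith) (by linarith)
  have hsin_two : Real.sin ω = 2 * Real.sin (ω / 2) * Real.cos (ω / 2) := by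
    rw [← Real.sin_two_mul]; ring_nf
  have hcos_sq : Real.cos (ω / 2) ^ 2 ≤ Real.sin ω := by
    nlinarith [mul_le_mul_of_nonneg_right hcos_le_sin hcos]
  rw [sectorSqrtConst, if_neg (by linarith), mul_pow, Real.sq_sqrt hsin]
  calc Real.sin ω * Real.cos (ω / 2) ^ 2 ≤ Real.sin ω * Real.sin ω :=
        mul_le_mul_of_nonneg_left hcos_sq hsin
    _ ≤ Real.sin θ ^ 2 := by nlinarith

theorem two_mul_sq_sectorSqrtConst_mul_le {ω s : ℝ} (hω : ω ∈ Icc 0 π) (hs : 0 ≤ s) {ζ : ℂ}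
    (hζ : ζ ∈ sector ω) :
    2 * sectorSqrtConst ω ^ 2 * s ≤ ‖(s : ℂ) + ζ‖ + ((s : ℂ) + ζ).re := by
  rcases le_or_gt 0 ζ.re with hre | hre
  · nlinarith [sq_sectorSqrtConst_le_one ω, two_mul_le_norm_ofReal_add_add_re (s := s) hre]
  obtain ⟨-, hζarg⟩ := (mem_sector_iff hω.1).1 hζ
  have hobtuse : π / 2 < |arg ζ| := by
    rw [← not_le, abs_arg_le_pi_div_two_iff]; exact hre.not_ge
  have hζω : |arg ζ| < ω := hζarg.resolve_left fun h => by
    rw [h, abs_zero] at hobtuse; linarith [Real.pi_pos]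
  have hc := sq_sectorSqrtConst_le_sin_sq hω.2 hobtuse hζω
  rw [← Real.abs_sin_eq_sin_abs_of_abs_le_pi (abs_arg_le_pi ζ), sq_abs] at hc
  nlinarith [two_mul_sin_sq_arg_le hs ζ]

theorem sectorSqrtConst_mul_sqrt_le_re_cpow_half {ω s : ℝ} (hω : ω ∈ Icc 0 π) (hs : 0 ≤ s)
    {ζ : ℂ} (hζ : ζ ∈ sector ω) :
    sectorSqrtConst ω * √s ≤ (((s : ℂ) + ζ) ^ ((1 : ℂ) / 2)).re := by
  rw [one_div, cpow_inv_two_re, ← Real.sqrt_sq (sectorSqrtConst_nonneg hω),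
    ← Real.sqrt_mul (sq_nonneg _)]
  exact Real.sqrt_le_sqrt (by linarith [two_mul_sq_sectorSqrtConst_mul_le hω hs hζ])

theorem abs_arg_eq_arctan {z : ℂ} (hz : 0 < z.re) : |arg z| = Real.arctan (|z.im| / z.re) := by
  have hlt : |arg z| < π / 2 := abs_arg_lt_pi_div_two_iff.2 (Or.inl hz)
  have htan : Real.tan |arg z| = |z.im| / z.re := by
    rw [← abs_of_pos hz, ← abs_div, ← tan_arg]
    rcases abs_cases (arg z) with ⟨h, h0⟩ | ⟨h, h0⟩
    · rw [h, abs_of_nonneg (Real.tan_nonneg_of_nonneg_of_le_pi_div_two h0 (by linarith))]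
    · have := Real.tan_nonneg_of_nonneg_of_le_pi_div_two (x := -arg z) (by linarith) (by linarith)
      rw [Real.tan_neg] at this
      rw [h, Real.tan_neg, abs_of_nonpos (by linarith)]
  rw [← htan, Real.arctan_tan (by linarith [abs_nonneg (arg z), Real.pi_pos]) hlt]

theorem abs_arg_sub_ofReal_le {z : ℂ} {r : ℝ} (hz : 0 < z.re) (hr : r ≤ z.re / 2) :
    |arg (z - r)| ≤ Real.arctan (2 * Real.tan |arg z|) := by
  have hzr : 0 < (z - r).re := by rw [sub_re, ofReal_re]; linarith
  rw [abs_arg_eq_arctan hzr, abs_arg_eq_arctan hz, Real.tan_arctan, sub_re, sub_im, ofReal_re,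
    ofReal_im, sub_zero]
  refine Real.arctan_strictMono.monotone ?_
  calc |z.im| / (z.re - r) ≤ |z.im| / (z.re / 2) :=
        div_le_div_of_nonneg_left (abs_nonneg _) (by positivity) (by linarith)
    _ = 2 * (|z.im| / z.re) := by field_simp

theorem sub_ofReal_mem_sector_arctan {θ r : ℝ} (hθ₀ : 0 ≤ θ) (hθ : θ < π / 2) {z : ℂ}
    (hz : z ∈ sector θ) (hr : r ≤ z.re / 2) :
    z - r ∈ sector (Real.arctan (2 * Real.tan θ)) := by
  obtain ⟨hz0, hzarg⟩ := (mem_sector_iff hθ₀).1 hz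
  have hz_re : 0 < z.re := by
    refine (abs_arg_lt_pi_div_two_iff.1 ?_).resolve_right hz0
    rcases hzarg with h | h
    · rw [h, abs_zero]; positivity
    · linarith
  have hkey := abs_arg_sub_ofReal_le hz_re hr
  rw [mem_sector_iff (Real.arctan_nonneg.2
    (mul_nonneg zero_le_two (Real.tan_nonneg_of_nonneg_of_le_pi_div_two hθ₀ hθ.le)))]
  refine ⟨ne_zero_of_re_pos (by rw [sub_re, ofReal_re]; linarith), ?_⟩
  rcases hzarg with h | h
  · rw [h, abs_zero, Real.tan_zero, mul_zero, Real.arctan_zero] at hkey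
    exact Or.inl (abs_nonpos_iff.1 hkey)
  · refine Or.inr (hkey.trans_lt (Real.arctan_strictMono ?_))
    have := Real.tan_lt_tan_of_nonneg_of_lt_pi_div_two (abs_nonneg _) hθ h
    linarith

theorem stmt16 (ω : ℝ) (hω : ω ∈ Set.Ico 0 Real.pi) (s : ℝ) (hs : 0 ≤ s)
    (c κ φ : ℝ)
    (hc : c = if ω ≤ Real.pi / 2 then Real.cos (ω / 2)
              else Real.sqrt (Real.sin ω) * Real.cos (ω / 2))
    (hκ : κ = c / 2) (hφ : φ = Real.arctan (2 * Real.tan (ω / 2))) :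
    ∀ lam : ℂ, (∃ ζ ∈ sector ω, lam = (s : ℂ) + ζ) →
      lam ^ ((1 : ℂ) / 2) ∈ sector (ω / 2) ∧
      c * Real.sqrt s ≤ (lam ^ ((1 : ℂ) / 2)).re ∧
      ∃ ζ ∈ sector φ, lam ^ ((1 : ℂ) / 2) = ((κ * Real.sqrt s : ℝ) : ℂ) + ζ := by
  rintro lam ⟨ζ, hζ, rfl⟩
  have hω' : ω ∈ Icc 0 π := ⟨hω.1, hω.2.le⟩
  have hsqrt_mem : ((s : ℂ) + ζ) ^ ((1 : ℂ) / 2) ∈ sector (ω / 2) :=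
    cpow_half_mem_sector hω.1 (ofReal_add_mem_sector hω' hs hζ)
  have hre : c * √s ≤ (((s : ℂ) + ζ) ^ ((1 : ℂ) / 2)).re :=
    hc ▸ sectorSqrtConst_mul_sqrt_le_re_cpow_half hω' hs hζ
  refine ⟨hsqrt_mem, hre, _, hφ ▸ sub_ofReal_mem_sector_arctan (by linarith [hω.1])
    (by linarith [hω.2]) hsqrt_mem (by rw [hκ]; linarith), by ring⟩
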